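/- arXiv:1812.02337 — 2 statements merged into one kernel-verified Lean document; each statement's English description precedes it below -/
import Mathlib

section
/- The map φ_r : M^{m×k} → ℝ, φ_r(Π) = min_{U ∈ S^{k×(k−r)}} ‖ΠU‖², is Hadamard directionally differentiable at every Π, with derivative φ'_{r,Π}(M) = min_{U ∈ Ψ(Π)} 2·tr((ΠU)ᵀ M U), where Ψ(Π) = argmin_{U ∈ S^{k×(k−r)}} ‖ΠU‖². That is, for any M_n → M in M^{m×k} and t_n ↓ 0, (φ_r(Π + t_n M_n) − φ_r(Π))/t_n → φ'_{r,Π}(M). -/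
open Matrix Filter Topology

noncomputable def frobNormSq {m k : ℕ} (A : Matrix (Fin m) (Fin k) ℝ) : ℝ :=
  Matrix.trace (Aᵀ * A)

noncomputable def frobNorm {m k : ℕ} (A : Matrix (Fin m) (Fin k) ℝ) : ℝ :=
  Real.sqrt (frobNormSq A)

theorem transpose_mul_self_isHermitian {m k : ℕ} (A : Matrix (Fin m) (Fin k) ℝ) :
    (Aᵀ * A).IsHermitian := by
  have h := Matrix.isHermitian_conjTranspose_mul_self A
  rwa [Matrix.conjTranspose_eq_transpose_of_trivial] at h

/-- `sv A j` is the `j+1`-th largest singular value of `A`. -/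
noncomputable def sv {m k : ℕ} (A : Matrix (Fin m) (Fin k) ℝ) : Fin k → ℝ :=
  fun j =>
    Real.sqrt ((transpose_mul_self_isHermitian A).eigenvalues
      (Tuple.sort ((transpose_mul_self_isHermitian A).eigenvalues) j.rev))

/-- `phi r A` is the sum of the squared singular values `σ_{r+1}², …, σ_k²`. -/
noncomputable def phi {m k : ℕ} (r : ℕ) (A : Matrix (Fin m) (Fin k) ℝ) : ℝ :=
  ∑ j ∈ Finset.univ.filter (fun j : Fin k => r ≤ (j : ℕ)), sv A j ^ 2

/-- The argmin set `Ψ(A)` of `U ↦ ‖A U‖²` over matrices with orthonormal columns. -/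
noncomputable def argminSet {m k : ℕ} (d : ℕ) (A : Matrix (Fin m) (Fin k) ℝ) :
    Set (Matrix (Fin k) (Fin d) ℝ) :=
  {U | Uᵀ * U = 1 ∧ ∀ V : Matrix (Fin k) (Fin d) ℝ, Vᵀ * V = 1 →
    frobNormSq (A * U) ≤ frobNormSq (A * V)}

noncomputable def phiDeriv {m k : ℕ} (r : ℕ) (A M : Matrix (Fin m) (Fin k) ℝ) : ℝ :=
  sInf {x : ℝ | ∃ U ∈ argminSet (k - r) A, x = 2 * Matrix.trace ((A * U)ᵀ * (M * U))}

/-!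
By Ky Fan's minimum principle, `phi r B` is the minimum of `‖B U‖²` over matrices `U` with `k - r`
orthonormal columns, namely the sum of the `k - r` smallest eigenvalues of `Bᵀ B`. The rest is
Danskin's theorem for this minimum over the compact Stiefel set, using the exact expansion
`‖(A + s N) U‖² = ‖A U‖² + 2 s tr ((A U)ᵀ N U) + s² ‖N U‖²`. A minimizer for `A` that is best in the
direction `M` gives the upper bound; minimizers for the perturbed matrices give the lower bound,
because their cluster points are minimizers for `A`.
-/

theorem frobNormSq_eq_sum {m k : ℕ} (A : Matrix (Fin m) (Fin k) ℝ) :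
    frobNormSq A = ∑ j, ∑ i, A i j ^ 2 := by
  simp [frobNormSq, Matrix.trace, Matrix.mul_apply, sq]

theorem frobNormSq_nonneg {m k : ℕ} (A : Matrix (Fin m) (Fin k) ℝ) : 0 ≤ frobNormSq A := by
  rw [frobNormSq_eq_sum]
  positivity

theorem continuous_frobNormSq {m k : ℕ} :
    Continuous (frobNormSq : Matrix (Fin m) (Fin k) ℝ → ℝ) := by
  unfold frobNormSq
  fun_prop

theorem frobNormSq_mul_eq_trace {m k d : ℕ} (B : Matrix (Fin m) (Fin k) ℝ)
    (U : Matrix (Fin k) (Fin d) ℝ) : frobNormSq (B * U) = trace (Uᵀ * (Bᵀ * B) * U) := by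
  simp only [frobNormSq, transpose_mul, Matrix.mul_assoc]

theorem frobNormSq_add_smul_mul {m k d : ℕ} (A N : Matrix (Fin m) (Fin k) ℝ) (s : ℝ)
    (U : Matrix (Fin k) (Fin d) ℝ) :
    frobNormSq ((A + s • N) * U) = frobNormSq (A * U)
      + s * (2 * trace ((A * U)ᵀ * (N * U))) + s ^ 2 * frobNormSq (N * U) := by
  have hsymm : trace ((N * U)ᵀ * (A * U)) = trace ((A * U)ᵀ * (N * U)) := by
    rw [← trace_transpose, transpose_mul, transpose_transpose]
  simp only [frobNormSq, Matrix.add_mul, smul_mul, transpose_add, transpose_smul,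
    Matrix.mul_add, Matrix.mul_smul, trace_add, trace_smul, smul_eq_mul, hsymm]
  ring

def stiefel (n d : Type*) [Fintype n] [DecidableEq d] : Set (Matrix n d ℝ) := {U | Uᵀ * U = 1}

section Stiefel

variable {n d : Type*} [Fintype n] [DecidableEq d]

theorem isClosed_stiefel : IsClosed (stiefel n d) :=
  isClosed_singleton.preimage (by fun_prop : Continuous fun U : Matrix n d ℝ => Uᵀ * U)

theorem sum_sq_col_of_mem_stiefel {U : Matrix n d ℝ} (hU : U ∈ stiefel n d) (j : d) :
    ∑ i, U i j ^ 2 = 1 := by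
  simpa [Matrix.mul_apply, sq] using congrFun (congrFun hU j) j

theorem isCompact_stiefel [Fintype d] : IsCompact (stiefel n d) := by
  refine (isCompact_univ_pi fun _ => isCompact_univ_pi fun _ =>
    isCompact_Icc (a := (-1 : ℝ)) (b := 1)).of_isClosed_subset
    isClosed_stiefel fun U hU i _ j _ => ?_
  rw [Set.mem_Icc, ← abs_le, ← sq_le_one_iff_abs_le_one, ← sum_sq_col_of_mem_stiefel hU j]
  exact Finset.single_le_sum (fun i _ => sq_nonneg (U i j)) (Finset.mem_univ i)

theorem mul_mem_stiefel [DecidableEq n] {m : Type*} [Fintype m] {Q : Matrix m n ℝ}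
    (hQ : Qᵀ * Q = 1) {U : Matrix n d ℝ} (hU : U ∈ stiefel n d) : Q * U ∈ stiefel m d := by
  change (Q * U)ᵀ * (Q * U) = 1
  rw [transpose_mul, Matrix.mul_assoc, ← Matrix.mul_assoc Qᵀ, hQ, Matrix.one_mul, hU]

theorem submatrix_one_mem_stiefel [DecidableEq n] (e : d ↪ n) :
    (1 : Matrix n n ℝ).submatrix id e ∈ stiefel n d := by
  change _ * _ = 1
  rw [transpose_submatrix, transpose_one, ← submatrix_mul _ _ _ _ _ Function.bijective_id,
    Matrix.one_mul, submatrix_one_embedding]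

theorem sum_sum_sq_of_mem_stiefel [Fintype d] {W : Matrix n d ℝ} (hW : W ∈ stiefel n d) :
    ∑ a, ∑ j, W a j ^ 2 = Fintype.card d := by
  rw [Finset.sum_comm]
  simp [sum_sq_col_of_mem_stiefel hW]

-- The rows of `W` have norm at most one because `W * Wᵀ` is an orthogonal projection.
theorem sum_sq_row_le_one_of_mem_stiefel [Fintype d] {W : Matrix n d ℝ} (hW : W ∈ stiefel n d)
    (a : n) : ∑ j, W a j ^ 2 ≤ 1 := by
  classical
  set P := W * Wᵀ
  have hPidem : P * P = P := by
    change W * Wᵀ * (W * Wᵀ) = W * Wᵀ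
    rw [Matrix.mul_assoc, ← Matrix.mul_assoc Wᵀ, hW.out, Matrix.one_mul]
  have hPaa : P a a = ∑ j, W a j ^ 2 := by simp [P, Matrix.mul_apply, sq]
  have hPsq : P a a = ∑ b, P a b ^ 2 := by
    conv_lhs => rw [← hPidem]
    simp only [Matrix.mul_apply, sq]
    congr 1 with b
    congr 1
    simp only [P, Matrix.mul_apply, transpose_apply, mul_comm]
  have hle : P a a ^ 2 ≤ P a a := hPsq ▸ Finset.single_le_sum (fun b _ => sq_nonneg (P a b))
    (Finset.mem_univ a)
  have hnonneg : 0 ≤ P a a := by rw [hPaa]; positivity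
  nlinarith

theorem trace_transpose_mul_diagonal_mul {n d : Type*} [Fintype n] [Fintype d] [DecidableEq n]
    (lam : n → ℝ) (W : Matrix n d ℝ) :
    trace (Wᵀ * diagonal lam * W) = ∑ a, lam a * ∑ j, W a j ^ 2 := by
  simp only [trace, diag, Matrix.mul_apply, transpose_apply, diagonal_apply, mul_ite, mul_zero,
    Finset.sum_ite_eq', Finset.mem_univ, if_true, Finset.mul_sum, sq]
  rw [Finset.sum_comm]
  simp only [mul_comm, mul_left_comm]

theorem sum_castLE_eq_sum_filter_lt {M : Type*} [AddCommMonoid M] {k d : ℕ} (hdk : d ≤ k)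
    (f : Fin k → M) :
    ∑ j : Fin d, f (Fin.castLE hdk j)
      = ∑ i ∈ Finset.univ.filter (fun i : Fin k => (i : ℕ) < d), f i := by
  refine (Finset.sum_map Finset.univ (Fin.castLEEmb hdk) f).symm.trans
    (Finset.sum_congr ?_ fun _ _ => rfl)
  ext i
  simp only [Finset.mem_map, Finset.mem_univ, true_and, Finset.mem_filter, Fin.castLEEmb_apply]
  exact ⟨by rintro ⟨j, rfl⟩; exact j.isLt, fun h => ⟨⟨i, h⟩, rfl⟩⟩

-- With `θ = μ (d - 1)`, monotonicity makes every term of `∑ i, (μ i - θ) * (c i - [i < d])`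
-- nonnegative, and the sum is the difference of the two sides.
theorem sum_filter_lt_le_sum_mul {k d : ℕ} (hdk : d ≤ k) {μ c : Fin k → ℝ} (hμ : Monotone μ)
    (hc0 : ∀ i, 0 ≤ c i) (hc1 : ∀ i, c i ≤ 1) (hc : ∑ i, c i = d) :
    ∑ i ∈ Finset.univ.filter (fun i : Fin k => (i : ℕ) < d), μ i ≤ ∑ i, μ i * c i := by
  rcases Nat.eq_zero_or_pos k with rfl | hk
  · simp
  set θ := μ ⟨d - 1, by omega⟩
  set ι : Fin k → ℝ := fun i => if (i : ℕ) < d then 1 else 0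
  have hμι : ∑ i ∈ Finset.univ.filter (fun i : Fin k => (i : ℕ) < d), μ i
      = ∑ i, μ i * ι i := by
    simp [ι, Finset.sum_filter]
  have hι : ∑ i, ι i = d := by
    simp only [ι]
    rw [← Finset.sum_filter, ← sum_castLE_eq_sum_filter_lt hdk (fun _ => (1 : ℝ))]
    simp
  have hterm : ∀ i, 0 ≤ (μ i - θ) * (c i - ι i) := by
    intro i
    by_cases hi : (i : ℕ) < d
    · have hμi : μ i ≤ θ := hμ (Fin.le_iff_val_le_val.2 (by simp only; omega))
      simp only [ι, if_pos hi]
      exact mul_nonneg_of_nonpos_of_nonpos (by linarith) (by linarith [hc1 i])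
    · have hμi : θ ≤ μ i := hμ (Fin.le_iff_val_le_val.2 (by simp only; omega))
      simp only [ι, if_neg hi, sub_zero]
      exact mul_nonneg (by linarith) (hc0 i)
  have hdiff : ∑ i, (μ i - θ) * (c i - ι i) = ∑ i, μ i * c i - ∑ i, μ i * ι i := by
    simp only [sub_mul, mul_sub, Finset.sum_sub_distrib, ← Finset.mul_sum, hc, hι]
    ring
  linarith [Finset.sum_nonneg fun i (_ : i ∈ Finset.univ) => hterm i]

theorem Matrix.IsHermitian.eigenvectorUnitary_transpose_mul_self {n : Type*} [Fintype n]
    [DecidableEq n] {S : Matrix n n ℝ} (hS : S.IsHermitian) :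
    (hS.eigenvectorUnitary : Matrix n n ℝ)ᵀ * hS.eigenvectorUnitary = 1 := by
  simpa [star_eq_conjTranspose] using Matrix.mem_unitaryGroup_iff'.1 hS.eigenvectorUnitary.2

theorem Matrix.IsHermitian.eq_eigenvectorUnitary_mul_diagonal_mul_transpose {n : Type*}
    [Fintype n] [DecidableEq n] {S : Matrix n n ℝ} (hS : S.IsHermitian) :
    S = hS.eigenvectorUnitary * diagonal hS.eigenvalues *
      (hS.eigenvectorUnitary : Matrix n n ℝ)ᵀ := by
  conv_lhs => rw [hS.spectral_theorem, Unitary.conjStarAlgAut_apply]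
  simp [star_eq_conjTranspose]

theorem transpose_mul_mul_mul_of_eq_conj {n d : Type*} [Fintype n] [Fintype d] [DecidableEq n]
    {S Q D : Matrix n n ℝ} (hQ : Qᵀ * Q = 1) (hS : S = Q * D * Qᵀ) (X : Matrix n d ℝ) :
    (Q * X)ᵀ * S * (Q * X) = Xᵀ * D * X := by
  have hQX : ∀ Y : Matrix n d ℝ, Qᵀ * (Q * Y) = Y := fun Y => by
    rw [← Matrix.mul_assoc, hQ, Matrix.one_mul]
  subst hS
  simp only [transpose_mul, Matrix.mul_assoc, hQX]

section KyFan

variable {k d : ℕ} {S Q : Matrix (Fin k) (Fin k) ℝ} {lam : Fin k → ℝ}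

-- `W = Qᵀ U` has orthonormal columns, so `tr (Uᵀ S U)` is a combination of the eigenvalues with
-- weights in `[0, 1]` summing to `d`.
theorem sum_filter_lt_sort_le_trace (hdk : d ≤ k) (hQ : Qᵀ * Q = 1)
    (hS : S = Q * diagonal lam * Qᵀ) {U : Matrix (Fin k) (Fin d) ℝ}
    (hU : U ∈ stiefel (Fin k) (Fin d)) :
    ∑ i ∈ Finset.univ.filter (fun i : Fin k => (i : ℕ) < d), lam (Tuple.sort lam i)
      ≤ trace (Uᵀ * S * U) := by
  have hQ' : Q * Qᵀ = 1 := mul_eq_one_comm.1 hQ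
  set W := Qᵀ * U
  have hW : W ∈ stiefel (Fin k) (Fin d) := mul_mem_stiefel (by rwa [transpose_transpose]) hU
  have hUW : U = Q * W := by rw [← Matrix.mul_assoc, hQ', Matrix.one_mul]
  set σ := Tuple.sort lam
  rw [hUW, transpose_mul_mul_mul_of_eq_conj hQ hS, trace_transpose_mul_diagonal_mul,
    ← Equiv.sum_comp σ]
  refine sum_filter_lt_le_sum_mul hdk (Tuple.monotone_sort lam) (fun _ => by positivity)
    (fun _ => sum_sq_row_le_one_of_mem_stiefel hW _) ?_
  rw [Equiv.sum_comp σ fun a => ∑ j, W a j ^ 2, sum_sum_sq_of_mem_stiefel hW, Fintype.card_fin]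

theorem exists_trace_eq_sum_filter_lt_sort (hdk : d ≤ k) (hQ : Qᵀ * Q = 1)
    (hS : S = Q * diagonal lam * Qᵀ) :
    ∃ U ∈ stiefel (Fin k) (Fin d), trace (Uᵀ * S * U)
      = ∑ i ∈ Finset.univ.filter (fun i : Fin k => (i : ℕ) < d), lam (Tuple.sort lam i) := by
  set e : Fin d ↪ Fin k := (Fin.castLEEmb hdk).trans (Tuple.sort lam).toEmbedding
  set E := (1 : Matrix (Fin k) (Fin k) ℝ).submatrix id e
  refine ⟨Q * E, mul_mem_stiefel hQ (submatrix_one_mem_stiefel e), ?_⟩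
  have hE : Eᵀ * diagonal lam * E = (diagonal lam).submatrix e e := by
    ext i j
    simp [E, Matrix.mul_apply, one_apply]
  rw [transpose_mul_mul_mul_of_eq_conj hQ hS, hE, submatrix_diagonal_embedding, trace_diagonal,
    ← sum_castLE_eq_sum_filter_lt hdk]
  rfl

theorem isLeast_trace_of_eq_conj (hdk : d ≤ k) (hQ : Qᵀ * Q = 1)
    (hS : S = Q * diagonal lam * Qᵀ) :
    IsLeast ((fun U => trace (Uᵀ * S * U)) '' stiefel (Fin k) (Fin d))
      (∑ i ∈ Finset.univ.filter (fun i : Fin k => (i : ℕ) < d), lam (Tuple.sort lam i)) :=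
  ⟨exists_trace_eq_sum_filter_lt_sort hdk hQ hS, by
    rintro _ ⟨U, hU, rfl⟩
    exact sum_filter_lt_sort_le_trace hdk hQ hS hU⟩

end KyFan

theorem phi_eq_sum_filter_lt_sort {m k : ℕ} (r : ℕ) (B : Matrix (Fin m) (Fin k) ℝ) :
    phi r B = ∑ i ∈ Finset.univ.filter (fun i : Fin k => (i : ℕ) < k - r),
      (transpose_mul_self_isHermitian B).eigenvalues
        (Tuple.sort (transpose_mul_self_isHermitian B).eigenvalues i) := by
  have hpsd := Matrix.posSemidef_conjTranspose_mul_self B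
  rw [conjTranspose_eq_transpose_of_trivial] at hpsd
  have hsq : ∀ j, sv B j ^ 2 = (transpose_mul_self_isHermitian B).eigenvalues
      (Tuple.sort (transpose_mul_self_isHermitian B).eigenvalues j.rev) :=
    fun j => Real.sq_sqrt (hpsd.eigenvalues_nonneg _)
  simp only [phi, hsq, Finset.sum_filter]
  refine Fintype.sum_equiv Fin.revPerm _ _ fun j => ?_
  have hrev := Fin.val_rev j
  have hj := j.isLt
  simp only [Fin.revPerm_apply]
  split_ifs <;> first | rfl | omega

theorem isLeast_phi {m k : ℕ} (r : ℕ) (B : Matrix (Fin m) (Fin k) ℝ) :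
    IsLeast ((fun U => frobNormSq (B * U)) '' stiefel (Fin k) (Fin (k - r))) (phi r B) := by
  have hS := transpose_mul_self_isHermitian B
  simp only [frobNormSq_mul_eq_trace B, phi_eq_sum_filter_lt_sort r B]
  exact isLeast_trace_of_eq_conj (Nat.sub_le k r) hS.eigenvectorUnitary_transpose_mul_self
    hS.eq_eigenvectorUnitary_mul_diagonal_mul_transpose

section Argmin

variable {m k d : ℕ}

theorem continuous_frobNormSq_mul :
    Continuous fun p : Matrix (Fin m) (Fin k) ℝ × Matrix (Fin k) (Fin d) ℝ =>
      frobNormSq (p.1 * p.2) :=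
  continuous_frobNormSq.comp (by fun_prop)

theorem mem_argminSet_iff_of_isLeast {B : Matrix (Fin m) (Fin k) ℝ} {a : ℝ}
    (h : IsLeast ((fun U => frobNormSq (B * U)) '' stiefel (Fin k) (Fin d)) a)
    {U : Matrix (Fin k) (Fin d) ℝ} :
    U ∈ argminSet d B ↔ U ∈ stiefel (Fin k) (Fin d) ∧ frobNormSq (B * U) = a := by
  constructor
  · rintro ⟨hU, hmin⟩
    obtain ⟨V, hV, hVa⟩ := h.1
    exact ⟨hU, le_antisymm (hVa ▸ hmin V hV) (h.2 ⟨U, hU, rfl⟩)⟩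
  · rintro ⟨hU, hUa⟩
    exact ⟨hU, fun V hV => hUa ▸ h.2 ⟨V, hV, rfl⟩⟩

theorem argminSet_nonempty_of_isLeast {B : Matrix (Fin m) (Fin k) ℝ} {a : ℝ}
    (h : IsLeast ((fun U => frobNormSq (B * U)) '' stiefel (Fin k) (Fin d)) a) :
    (argminSet d B).Nonempty :=
  let ⟨U, hU, hUa⟩ := h.1
  ⟨U, (mem_argminSet_iff_of_isLeast h).2 ⟨hU, hUa⟩⟩

theorem isCompact_argminSet (d : ℕ) (B : Matrix (Fin m) (Fin k) ℝ) :
    IsCompact (argminSet d B) := by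
  have hset : argminSet d B = stiefel (Fin k) (Fin d) ∩
      ⋂ V ∈ stiefel (Fin k) (Fin d), {U | frobNormSq (B * U) ≤ frobNormSq (B * V)} := by
    ext U
    simp [argminSet, stiefel]
  rw [hset]
  exact isCompact_stiefel.inter_right (isClosed_biInter fun V _ =>
    isClosed_le (continuous_frobNormSq.comp (by fun_prop)) continuous_const)

theorem mem_argminSet_of_tendsto {ι : Type*} {l : Filter ι} [l.NeBot]
    {B : ι → Matrix (Fin m) (Fin k) ℝ} {A : Matrix (Fin m) (Fin k) ℝ}
    {V : ι → Matrix (Fin k) (Fin d) ℝ} {V₀ : Matrix (Fin k) (Fin d) ℝ}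
    (hB : Tendsto B l (𝓝 A)) (hV : Tendsto V l (𝓝 V₀)) (hmem : ∀ i, V i ∈ argminSet d (B i)) :
    V₀ ∈ argminSet d A := by
  refine ⟨isClosed_stiefel.mem_of_tendsto hV (Eventually.of_forall fun i => (hmem i).1),
    fun U hU => ?_⟩
  have hlimV := (continuous_frobNormSq_mul.tendsto (A, V₀)).comp (hB.prodMk_nhds hV)
  have hlimU := (continuous_frobNormSq_mul.tendsto (A, U)).comp
    (hB.prodMk_nhds tendsto_const_nhds)
  exact le_of_tendsto_of_tendsto' hlimV hlimU fun i => (hmem i).2 U hU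

end Argmin

section Danskin

variable {m k d : ℕ} {v : Matrix (Fin m) (Fin k) ℝ → ℝ}

theorem div_sub_le_of_mem_argminSet
    (hv : ∀ B, IsLeast ((fun U => frobNormSq (B * U)) '' stiefel (Fin k) (Fin d)) (v B))
    {A N : Matrix (Fin m) (Fin k) ℝ} {U : Matrix (Fin k) (Fin d) ℝ} (hU : U ∈ argminSet d A)
    {s : ℝ} (hs : 0 < s) :
    (v (A + s • N) - v A) / s ≤ 2 * trace ((A * U)ᵀ * (N * U)) + s * frobNormSq (N * U) := by
  have hle : v (A + s • N) ≤ frobNormSq ((A + s • N) * U) := (hv _).2 ⟨U, hU.1, rfl⟩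
  have heq : frobNormSq (A * U) = v A := ((mem_argminSet_iff_of_isLeast (hv A)).1 hU).2
  rw [frobNormSq_add_smul_mul] at hle
  rw [div_le_iff₀ hs]
  linarith

theorem le_div_sub_of_mem_argminSet
    (hv : ∀ B, IsLeast ((fun U => frobNormSq (B * U)) '' stiefel (Fin k) (Fin d)) (v B))
    {A N : Matrix (Fin m) (Fin k) ℝ} {s : ℝ} (hs : 0 < s) {V : Matrix (Fin k) (Fin d) ℝ}
    (hV : V ∈ argminSet d (A + s • N)) :
    2 * trace ((A * V)ᵀ * (N * V)) ≤ (v (A + s • N) - v A) / s := by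
  have heq : frobNormSq ((A + s • N) * V) = v (A + s • N) :=
    ((mem_argminSet_iff_of_isLeast (hv _)).1 hV).2
  have hle : v A ≤ frobNormSq (A * V) := (hv A).2 ⟨V, hV.1, rfl⟩
  have hquad : 0 ≤ s ^ 2 * frobNormSq (N * V) := by positivity [frobNormSq_nonneg (N * V)]
  rw [frobNormSq_add_smul_mul] at heq
  rw [le_div_iff₀ hs]
  linarith

-- Otherwise, by compactness of the Stiefel set, a subsequence of the `V n` converges to some
-- `V₀ ∈ argminSet d A` with `2 * trace ((A * V₀)ᵀ * (M * V₀)) ≤ x`.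
theorem eventually_lt_trace_of_mem_argminSet {A M : Matrix (Fin m) (Fin k) ℝ}
    {B N : ℕ → Matrix (Fin m) (Fin k) ℝ} {V : ℕ → Matrix (Fin k) (Fin d) ℝ} {x : ℝ}
    (hB : Tendsto B atTop (𝓝 A)) (hN : Tendsto N atTop (𝓝 M))
    (hV : ∀ n, V n ∈ argminSet d (B n))
    (hx : ∀ U ∈ argminSet d A, x < 2 * trace ((A * U)ᵀ * (M * U))) :
    ∀ᶠ n in atTop, x < 2 * trace ((A * V n)ᵀ * (N n * V n)) := by
  have : FirstCountableTopology (Matrix (Fin k) (Fin d) ℝ) :=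
    inferInstanceAs (FirstCountableTopology (Fin k → Fin d → ℝ))
  by_contra hfreq
  obtain ⟨φ, hφ, hle⟩ := extraction_of_frequently_atTop (not_eventually.1 hfreq)
  obtain ⟨V₀, -, ψ, hψ, hVψ⟩ := isCompact_stiefel.tendsto_subseq fun j => (hV (φ j)).1
  have hρ : Tendsto (φ ∘ ψ) atTop atTop := (hφ.comp hψ).tendsto_atTop
  have hV₀ : V₀ ∈ argminSet d A := mem_argminSet_of_tendsto (hB.comp hρ) hVψ fun j => hV _
  have hg : Continuous fun p : Matrix (Fin m) (Fin k) ℝ × Matrix (Fin k) (Fin d) ℝ =>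
      2 * trace ((A * p.2)ᵀ * (p.1 * p.2)) := by fun_prop
  have hlim := (hg.tendsto (M, V₀)).comp ((hN.comp hρ).prodMk_nhds hVψ)
  exact (hx V₀ hV₀).not_ge (le_of_tendsto' hlim fun j => not_lt.1 (hle (ψ j)))

theorem tendsto_div_sub_of_isLeast
    (hv : ∀ B, IsLeast ((fun U => frobNormSq (B * U)) '' stiefel (Fin k) (Fin d)) (v B))
    (A M : Matrix (Fin m) (Fin k) ℝ) (Ms : ℕ → Matrix (Fin m) (Fin k) ℝ) (t : ℕ → ℝ)
    (htpos : ∀ n, 0 < t n) (ht0 : Tendsto t atTop (𝓝 0)) (hMs : Tendsto Ms atTop (𝓝 M)) :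
    Tendsto (fun n => (v (A + t n • Ms n) - v A) / t n) atTop
      (𝓝 (sInf {x : ℝ | ∃ U ∈ argminSet d A, x = 2 * trace ((A * U)ᵀ * (M * U))})) := by
  have hg : Continuous fun U : Matrix (Fin k) (Fin d) ℝ => 2 * trace ((A * U)ᵀ * (M * U)) := by
    fun_prop
  obtain ⟨U₀, hU₀, hmin⟩ := (isCompact_argminSet d A).exists_isMinOn
    (argminSet_nonempty_of_isLeast (hv A)) hg.continuousOn
  have hinf : sInf {x : ℝ | ∃ U ∈ argminSet d A, x = 2 * trace ((A * U)ᵀ * (M * U))}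
      = 2 * trace ((A * U₀)ᵀ * (M * U₀)) :=
    IsLeast.csInf_eq ⟨⟨U₀, hU₀, rfl⟩, by rintro _ ⟨U, hU, rfl⟩; exact hmin hU⟩
  have hB : Tendsto (fun n => A + t n • Ms n) atTop (𝓝 A) := by
    simpa using tendsto_const_nhds.add (ht0.smul hMs)
  choose V hV using fun n => argminSet_nonempty_of_isLeast (hv (A + t n • Ms n))
  have hup : Tendsto
      (fun n => 2 * trace ((A * U₀)ᵀ * (Ms n * U₀)) + t n * frobNormSq (Ms n * U₀))
      atTop (𝓝 (2 * trace ((A * U₀)ᵀ * (M * U₀)))) := by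
    have hlin : Continuous fun N : Matrix (Fin m) (Fin k) ℝ =>
        2 * trace ((A * U₀)ᵀ * (N * U₀)) := by
      fun_prop
    have hquad : Continuous fun N : Matrix (Fin m) (Fin k) ℝ => frobNormSq (N * U₀) :=
      continuous_frobNormSq.comp (by fun_prop)
    simpa using ((hlin.tendsto M).comp hMs).add (ht0.mul ((hquad.tendsto M).comp hMs))
  rw [hinf, tendsto_order]
  refine ⟨fun x hx => ?_, fun x hx => ?_⟩
  · filter_upwards [eventually_lt_trace_of_mem_argminSet hB hMs hV
      fun U hU => hx.trans_le (hmin hU)] with n hn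
    exact hn.trans_le (le_div_sub_of_mem_argminSet hv (htpos n) (hV n))
  · filter_upwards [hup.eventually_lt_const hx] with n hn
    exact (div_sub_le_of_mem_argminSet hv hU₀ (htpos n)).trans_lt hn

end Danskin

theorem phi_hadamard_directional_deriv_general {m k : ℕ} (r : ℕ)
    (A M : Matrix (Fin m) (Fin k) ℝ) (Ms : ℕ → Matrix (Fin m) (Fin k) ℝ) (t : ℕ → ℝ)
    (htpos : ∀ n, 0 < t n) (ht0 : Tendsto t atTop (nhds 0))
    (hMs : Tendsto Ms atTop (nhds M)) :
    Tendsto (fun n => (phi r (A + t n • Ms n) - phi r A) / t n) atTop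
      (nhds (phiDeriv r A M)) :=
  tendsto_div_sub_of_isLeast (isLeast_phi r) A M Ms t htpos ht0 hMs

/-- Hadamard directional differentiability of `φ_r`, with derivative
`M ↦ min_{U ∈ Ψ(A)} 2 tr((A U)ᵀ M U)`. -/
theorem phi_hadamard_directional_deriv {m k : ℕ} (hk : k ≤ m) (r : ℕ) (hr : r < k)
    (A M : Matrix (Fin m) (Fin k) ℝ) (Ms : ℕ → Matrix (Fin m) (Fin k) ℝ) (t : ℕ → ℝ)
    (htpos : ∀ n, 0 < t n) (ht0 : Tendsto t atTop (nhds 0))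
    (hMs : Tendsto Ms atTop (nhds M)) :
    Tendsto (fun n => (phi r (A + t n • Ms n) - phi r A) / t n) atTop
      (nhds (phiDeriv r A M)) :=
  phi_hadamard_directional_deriv_general r A M Ms t htpos ht0 hMs
end Stiefel
end

section
/- Let Π ∈ M^{m×k} with rank(Π) ≤ r. If rank(Π) = r, then there exists a bilinear map Φ''_{r,Π} : M^{m×k} × M^{m×k} → ℝ such that φ''_{r,Π}(M) = Φ''_{r,Π}(M, M) for all M; explicitly Φ''_{r,Π}(M₁, M₂) = tr(Q₂ᵀ M₁ᵀ P₂ P₂ᵀ M₂ Q₂). If rank(Π) < r, then no such bilinear map exists. -/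
open Matrix Filter Topology

/-!
Since `P₂` and `Q₂` have orthonormal columns, `M ↦ P₂ᵀ M Q₂` is onto, so everything reduces
to the function `φ_t = phi t` with `t = r - rank A`.

If `t = 0`, `φ_0(N)` is the sum of all squared singular values of `N`, i.e. `tr (Nᵀ N)`, which
is visibly the quadratic form of the trace pairing.

If `t ≥ 1`, take `N` whose Gram matrix `Nᵀ N` is a projection of rank `s`: its squared singular
values are `s` ones followed by zeros, so `φ_t(N) = s - t` (truncated). For the `0/1`
diagonals `N₁`, `N₂` supported on `{0, …, t-1}` and `{t}` this gives `φ_t(N₁) = φ_t(N₂) = 0`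
but `φ_t(N₁ ± N₂) = 1`, violating the parallelogram law of a quadratic form.
-/

open Finset

section SingularValues

variable {m m' k : ℕ}

lemma Matrix.IsHermitian.eigenvalues_congr {𝕜 n : Type*} [RCLike 𝕜] [Fintype n] [DecidableEq n]
    {S T : Matrix n n 𝕜} (hS : S.IsHermitian) (hT : T.IsHermitian) (h : S = T) :
    hS.eigenvalues = hT.eigenvalues := by
  subst h; rfl

lemma sv_eq_of_gram_eq {A : Matrix (Fin m) (Fin k) ℝ} {B : Matrix (Fin m') (Fin k) ℝ}
    (h : Aᵀ * A = Bᵀ * B) : sv A = sv B := by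
  unfold sv
  rw [Matrix.IsHermitian.eigenvalues_congr _ (transpose_mul_self_isHermitian B) h]

lemma phi_eq_of_gram_eq {A : Matrix (Fin m) (Fin k) ℝ} {B : Matrix (Fin m') (Fin k) ℝ}
    (h : Aᵀ * A = Bᵀ * B) (t : ℕ) : phi t A = phi t B := by
  simp only [phi, sv_eq_of_gram_eq h]

lemma phi_isometry_mul {n : ℕ} {E : Matrix (Fin m) (Fin n) ℝ} (hE : Eᵀ * E = 1)
    (N : Matrix (Fin n) (Fin k) ℝ) (t : ℕ) : phi t (E * N) = phi t N :=
  phi_eq_of_gram_eq (by rw [Matrix.transpose_mul, Matrix.mul_assoc, ← Matrix.mul_assoc Eᵀ, hE,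
    Matrix.one_mul]) t

lemma sv_sq (A : Matrix (Fin m) (Fin k) ℝ) (j : Fin k) :
    sv A j ^ 2 = (transpose_mul_self_isHermitian A).eigenvalues
      (Tuple.sort (transpose_mul_self_isHermitian A).eigenvalues j.rev) := by
  refine Real.sq_sqrt (Matrix.PosSemidef.eigenvalues_nonneg ?_ _)
  simpa using Matrix.posSemidef_conjTranspose_mul_self A

lemma antitone_sv_sq (A : Matrix (Fin m) (Fin k) ℝ) : Antitone fun j => sv A j ^ 2 := by
  intro i j hij
  simp only [sv_sq]
  exact Tuple.monotone_sort (transpose_mul_self_isHermitian A).eigenvalues (Fin.rev_le_rev.mpr hij)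

lemma sum_sv_sq (A : Matrix (Fin m) (Fin k) ℝ) : ∑ j, sv A j ^ 2 = frobNormSq A := by
  simp only [sv_sq, frobNormSq, (transpose_mul_self_isHermitian A).trace_eq_sum_eigenvalues,
    RCLike.ofReal_real_eq_id, id]
  exact (Fin.revPerm.trans (Tuple.sort _)).sum_comp _

lemma phi_zero_eq_frobNormSq (A : Matrix (Fin m) (Fin k) ℝ) : phi 0 A = frobNormSq A := by
  simp [phi, sum_sv_sq]

lemma sv_sq_eq_zero_or_one {A : Matrix (Fin m) (Fin k) ℝ} (h : IsIdempotentElem (Aᵀ * A))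
    (j : Fin k) : sv A j ^ 2 = 0 ∨ sv A j ^ 2 = 1 := by
  rw [sv_sq]
  exact h.spectrum_subset ℝ ((transpose_mul_self_isHermitian A).eigenvalues_mem_spectrum_real _)

end SingularValues

section ZeroOne

variable {n : ℕ} {f : Fin n → ℝ}

lemma Fin.eq_ite_lt_card_of_antitone (hf : Antitone f) (h01 : ∀ j, f j = 0 ∨ f j = 1)
    (j : Fin n) : f j = if (j : ℕ) < #{i | f i = 1} then 1 else 0 := by
  rcases h01 j with h | h
  · have hsub : ({i | f i = 1} : Finset (Fin n)) ⊆ Iio j := fun i hi => by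
      rw [mem_filter] at hi
      by_contra hij
      linarith [hf (not_lt.mp (mem_Iio.not.mp hij)), hi.2]
    have := card_le_card hsub
    rw [Fin.card_Iio] at this
    rw [h, if_neg (by omega)]
  · have hsub : Iic j ⊆ ({i | f i = 1} : Finset (Fin n)) := fun i hi => by
      rw [mem_filter]
      refine ⟨mem_univ _, (h01 i).resolve_left fun hi0 => ?_⟩
      linarith [hf (mem_Iic.mp hi)]
    have := card_le_card hsub
    rw [Fin.card_Iic] at this
    rw [h, if_pos (by omega)]

lemma Fin.sum_filter_le_of_antitone (hf : Antitone f) (h01 : ∀ j, f j = 0 ∨ f j = 1) {s : ℕ}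
    (hs : ∑ j, f j = s) (t : ℕ) :
    ∑ j ∈ univ.filter (fun j : Fin n => t ≤ (j : ℕ)), f j = ((s - t : ℕ) : ℝ) := by
  have hcard : #{i | f i = 1} = s := by
    have : ∑ j, f j = ∑ j, if f j = 1 then (1 : ℝ) else 0 :=
      sum_congr rfl fun j _ => by rcases h01 j with h | h <;> simp [h]
    rw [this, sum_boole] at hs
    exact_mod_cast hs
  have hsn : s ≤ n := hcard ▸ (card_filter_le _ _).trans_eq (card_fin n)
  have hf' : ∀ j, f j = if (j : ℕ) < s then 1 else 0 :=
    hcard ▸ Fin.eq_ite_lt_card_of_antitone hf h01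
  simp_rw [sum_filter, hf', ← ite_and]
  rw [Fin.sum_univ_eq_sum_range (fun j => if t ≤ j ∧ j < s then (1 : ℝ) else 0), sum_boole]
  rw [show {j ∈ range n | t ≤ j ∧ j < s} = Ico t s by ext; simp; omega, Nat.card_Ico]

end ZeroOne

lemma phi_eq_of_isIdempotentElem_gram {m k s : ℕ} {A : Matrix (Fin m) (Fin k) ℝ}
    (h : IsIdempotentElem (Aᵀ * A)) (hs : frobNormSq A = s) (t : ℕ) :
    phi t A = ((s - t : ℕ) : ℝ) :=
  Fin.sum_filter_le_of_antitone (antitone_sv_sq A) (sv_sq_eq_zero_or_one h)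
    ((sum_sv_sq A).trans hs) t

lemma phi_diagonal {n : ℕ} {d : Fin n → ℝ} {S : Finset (Fin n)}
    (hd : ∀ j, d j ^ 2 = if j ∈ S then 1 else 0) (t : ℕ) :
    phi t (diagonal d) = ((#S - t : ℕ) : ℝ) := by
  have hgram : (diagonal d)ᵀ * diagonal d =
      diagonal fun j => if j ∈ S then 1 else 0 := by
    rw [diagonal_transpose, diagonal_mul_diagonal]
    simp_rw [← sq, hd]
  refine phi_eq_of_isIdempotentElem_gram ?_ ?_ t
  · rw [IsIdempotentElem, hgram, diagonal_mul_diagonal]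
    congr 1; ext j; split_ifs <;> norm_num
  · rw [frobNormSq, hgram, trace_diagonal, sum_boole]
    simp

lemma LinearMap.parallelogram_law {R M : Type*} [CommRing R] [AddCommGroup M] [Module R M]
    (B : M →ₗ[R] M →ₗ[R] R) (x y : M) :
    B (x + y) (x + y) + B (x - y) (x - y) = 2 * (B x x + B y y) := by
  simp only [map_add, map_sub, LinearMap.add_apply, LinearMap.sub_apply]
  ring

lemma not_exists_bilin_phi_diagonal {n t : ℕ} (ht : 0 < t) (htn : t < n) :
    ¬ ∃ B : (Fin n → ℝ) →ₗ[ℝ] (Fin n → ℝ) →ₗ[ℝ] ℝ,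
      ∀ d, phi t (diagonal d) = B d d := by
  rintro ⟨B, hB⟩
  let τ : Fin n := ⟨t, htn⟩
  let d₁ : Fin n → ℝ := fun j => if j < τ then 1 else 0
  let d₂ : Fin n → ℝ := fun j => if j = τ then 1 else 0
  have h₁ : phi t (diagonal d₁) = 0 := by
    rw [phi_diagonal (S := Iio τ) fun j => by simp [d₁]]
    simp [τ]
  have h₂ : phi t (diagonal d₂) = 0 := by
    rw [phi_diagonal (S := {τ}) fun j => by simp [d₂]]
    simp; omega
  have hsum : ∀ d : Fin n → ℝ, (d = d₁ + d₂ ∨ d = d₁ - d₂) → phi t (diagonal d) = 1 := by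
    rintro d hd
    rw [phi_diagonal (S := Iic τ) fun j => by
      rcases hd with rfl | rfl <;> simp only [d₁, d₂, Pi.add_apply, Pi.sub_apply, mem_Iic] <;>
        split_ifs <;> first | order | norm_num]
    simp [τ]
  have := B.parallelogram_law d₁ d₂
  rw [← hB, ← hB, ← hB, ← hB, h₁, h₂, hsum _ (.inl rfl), hsum _ (.inr rfl)] at this
  norm_num at this

lemma Matrix.transpose_mul_self_submatrix_one {R p n : Type*} [NonAssocSemiring R] [Fintype p]
    [DecidableEq p] [DecidableEq n] {e : n → p} (he : Function.Injective e) :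
    ((1 : Matrix p p R).submatrix id e)ᵀ * (1 : Matrix p p R).submatrix id e = 1 := by
  ext i j
  simp [Matrix.mul_apply, Matrix.one_apply, he.eq_iff]

lemma not_exists_bilin_phi {p n t : ℕ} (hnp : n ≤ p) (ht : 0 < t) (htn : t < n) :
    ¬ ∃ B : Matrix (Fin p) (Fin n) ℝ →ₗ[ℝ] Matrix (Fin p) (Fin n) ℝ →ₗ[ℝ] ℝ,
      ∀ N, phi t N = B N N := by
  rintro ⟨B, hB⟩
  let E := (1 : Matrix (Fin p) (Fin p) ℝ).submatrix id (Fin.castLE hnp)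
  let f := (mulLeftLinearMap (Fin n) ℝ E).comp (Matrix.diagonalLinearMap (Fin n) ℝ ℝ)
  refine not_exists_bilin_phi_diagonal ht htn ⟨B.compl₁₂ f f, fun d => ?_⟩
  rw [← phi_isometry_mul (Matrix.transpose_mul_self_submatrix_one (Fin.castLE_injective hnp)),
    hB]
  rfl

theorem second_deriv_bilinear_iff_general {m k : ℕ} (hk : k ≤ m) (r : ℕ) (hr : r < k)
    (A : Matrix (Fin m) (Fin k) ℝ)
    (P₂ : Matrix (Fin m) (Fin (m - A.rank)) ℝ) (Q₂ : Matrix (Fin k) (Fin (k - A.rank)) ℝ)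
    (hP : P₂ᵀ * P₂ = 1)
    (hQ : Q₂ᵀ * Q₂ = 1) :
    (A.rank = r →
      ∃ B : Matrix (Fin m) (Fin k) ℝ →ₗ[ℝ] Matrix (Fin m) (Fin k) ℝ →ₗ[ℝ] ℝ,
        (∀ M, phi (r - A.rank) (P₂ᵀ * M * Q₂) = B M M) ∧
        (∀ M₁ M₂, B M₁ M₂ = Matrix.trace (Q₂ᵀ * M₁ᵀ * P₂ * P₂ᵀ * M₂ * Q₂))) ∧
    (A.rank < r →
      ¬ ∃ B : Matrix (Fin m) (Fin k) ℝ →ₗ[ℝ] Matrix (Fin m) (Fin k) ℝ →ₗ[ℝ] ℝ,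
        ∀ M, phi (r - A.rank) (P₂ᵀ * M * Q₂) = B M M) := by
  refine ⟨fun hrank => ?_, fun hrank ⟨B, hB⟩ => ?_⟩
  · refine ⟨LinearMap.mk₂ ℝ (fun M₁ M₂ => trace (Q₂ᵀ * M₁ᵀ * P₂ * P₂ᵀ * M₂ * Q₂))
      (fun _ _ _ => by simp [Matrix.add_mul, Matrix.mul_add])
      (fun _ _ _ => by simp)
      (fun _ _ _ => by simp [Matrix.add_mul, Matrix.mul_add])
      (fun _ _ _ => by simp), fun M => ?_, fun _ _ => rfl⟩
    subst hrank
    rw [Nat.sub_self, phi_zero_eq_frobNormSq, frobNormSq]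
    simp [Matrix.transpose_mul, Matrix.mul_assoc]
  · let g := (mulRightLinearMap _ ℝ Q₂ᵀ).comp (mulLeftLinearMap _ ℝ P₂)
    refine not_exists_bilin_phi (t := r - A.rank) (by omega) (by omega) (by omega)
      ⟨B.compl₁₂ g g, fun N => ?_⟩
    have hN : P₂ᵀ * (P₂ * N * Q₂ᵀ) * Q₂ = N := by
      rw [← Matrix.mul_assoc, ← Matrix.mul_assoc, hP, Matrix.one_mul, Matrix.mul_assoc, hQ,
        Matrix.mul_one]
    change phi _ N = B (P₂ * N * Q₂ᵀ) (P₂ * N * Q₂ᵀ)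
    rw [← hB, hN]

/-- if `rank A = r`, the second derivative `M ↦ φ''_{r,A}(M)` is the quadratic
form of the bilinear map `(M₁, M₂) ↦ tr(Q₂ᵀ M₁ᵀ P₂ P₂ᵀ M₂ Q₂)`; if `rank A < r`, no bilinear
map induces it. -/
theorem second_deriv_bilinear_iff {m k : ℕ} (hk : k ≤ m) (r : ℕ) (hr : r < k)
    (A : Matrix (Fin m) (Fin k) ℝ) (hrank : A.rank ≤ r)
    (P₂ : Matrix (Fin m) (Fin (m - A.rank)) ℝ) (Q₂ : Matrix (Fin k) (Fin (k - A.rank)) ℝ)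
    (hP : P₂ᵀ * P₂ = 1) (hPA : P₂ᵀ * A = 0)
    (hQ : Q₂ᵀ * Q₂ = 1) (hAQ : A * Q₂ = 0) :
    (A.rank = r →
      ∃ B : Matrix (Fin m) (Fin k) ℝ →ₗ[ℝ] Matrix (Fin m) (Fin k) ℝ →ₗ[ℝ] ℝ,
        (∀ M, phi (r - A.rank) (P₂ᵀ * M * Q₂) = B M M) ∧
        (∀ M₁ M₂, B M₁ M₂ = Matrix.trace (Q₂ᵀ * M₁ᵀ * P₂ * P₂ᵀ * M₂ * Q₂))) ∧
    (A.rank < r →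
      ¬ ∃ B : Matrix (Fin m) (Fin k) ℝ →ₗ[ℝ] Matrix (Fin m) (Fin k) ℝ →ₗ[ℝ] ℝ,
        ∀ M, phi (r - A.rank) (P₂ᵀ * M * Q₂) = B M M) :=
  second_deriv_bilinear_iff_general hk r hr A P₂ Q₂ hP hQ
end
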